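/- Adversary bound for direct sums and tensor products of unitary implementations: let D be a finite set, X, Z, Z′ finite-dimensional complex inner product spaces, and for each x ∈ D let O_x be a unitary on X, V_x a unitary on Z, and W_x a unitary on Z′. Then: (i) γ₂((V_x ⊕ W_x − V_y ⊕ W_y)_{x,y∈D} | (O_x − O_y)_{x,y∈D}) = max{γ₂((V_x − V_y)_{x,y} | (O_x − O_y)_{x,y}), γ₂((W_x − W_y)_{x,y} | (O_x − O_y)_{x,y})}; (ii) if both γ₂((V_x − V_y)_{x,y} | (O_x − O_y)_{x,y}) and γ₂((W_x − W_y)_{x,y} | (O_x − O_y)_{x,y}) are finite, then γ₂((V_x ⊗ W_x − V_y ⊗ W_y)_{x,y∈D} | (O_x − O_y)_{x,y∈D}) ≤ γ₂((V_x − V_y)_{x,y} | (O_x − O_y)_{x,y}) + γ₂((W_x − W_y)_{x,y} | (O_x − O_y)_{x,y}). -/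

import Mathlib

/-!
Everything is argued on single factorizations `A x y = (Υ x)† (Δ x y ⊗ id) (Φ y)`, using that
`γ₂(A | Δ) ≤ r` exactly when `A` has factorizations of cost `c` for every `c > r`.

(i) Stacking factorizations of `V` and `W` block-diagonally factors `V ⊕ W` at the larger of the
two costs. Conversely, compressing a factorization of `V ⊕ W` by the isometric inclusion of one
summand factors that summand at no larger cost.

(ii) `V_x ⊗ W_x - V_y ⊗ W_y = (V_x - V_y) ⊗ W_x + V_y ⊗ (W_x - W_y)`, and `γ₂` is subadditive
(stacking two factorizations adds their costs). In the first term the unitary `W_x` is absorbed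
into `Υ x`, which slices the second tensor factor along the orthonormal basis `W_x e`, while `Φ y`
slices along `e`; both slicings are isometries, so the cost does not grow. In the second term `V_y`
is absorbed into `Φ y` in the same way.
-/

noncomputable section

open scoped ENNReal ComplexOrder

/-- A linear endomorphism of a finite-dimensional complex inner product space is unitary. -/
def IsUnitaryMap {E : Type*} [NormedAddCommGroup E] [InnerProductSpace ℂ E]
    [FiniteDimensional ℂ E] (f : E →ₗ[ℂ] E) : Prop :=
  LinearMap.adjoint f ∘ₗ f = LinearMap.id ∧ f ∘ₗ LinearMap.adjoint f = LinearMap.id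

/-- Operator norm of a linear map between finite-dimensional inner product spaces. -/
noncomputable def opNorm {E F : Type*} [NormedAddCommGroup E] [InnerProductSpace ℂ E]
    [NormedAddCommGroup F] [InnerProductSpace ℂ F] [FiniteDimensional ℂ E]
    (f : E →ₗ[ℂ] F) : ℝ :=
  ‖LinearMap.toContinuousLinearMap f‖

/-- A complex scalar viewed as a linear map `ℂ → ℂ`. -/
noncomputable def scalarMap (c : ℂ) : ℂ →ₗ[ℂ] ℂ := c • LinearMap.id

/-- The block-diagonal map `⊕ᵢ Δᵢ` on an `ℓ²`-direct sum of copies of a space. -/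
noncomputable def piBlock {ι : Type*} [Fintype ι] {X₁ X₂ : Type*}
    [NormedAddCommGroup X₁] [InnerProductSpace ℂ X₁]
    [NormedAddCommGroup X₂] [InnerProductSpace ℂ X₂]
    (Δ : ι → (X₂ →ₗ[ℂ] X₁)) :
    PiLp 2 (fun _ : ι => X₂) →ₗ[ℂ] PiLp 2 (fun _ : ι => X₁) :=
  (WithLp.linearEquiv 2 ℂ (∀ _ : ι, X₁)).symm.toLinearMap ∘ₗ
    (LinearMap.pi fun i => Δ i ∘ₗ LinearMap.proj i) ∘ₗ
      (WithLp.linearEquiv 2 ℂ (∀ _ : ι, X₂)).toLinearMap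

/-- The relative `γ₂`-norm `γ₂(A | Δ)` of a family `A = (A_{xy} : Z₂ → Z₁)` relative to a
family `Δ = (Δ_{xy} : X₂ → X₁)`: the infimum over `k ∈ ℕ` and factorizations
`A_{xy} = Υ_x* ∘ (Δ_{xy} ⊗ id_{ℂᵏ}) ∘ Φ_y` of `max (max_x ‖Υ_x‖²) (max_y ‖Φ_y‖²)`,
where `X ⊗ ℂᵏ` is realized as the `ℓ²`-direct sum of `k` copies of `X`.
The infimum of the empty set is `+∞`. -/
noncomputable def relGamma2 {D₁ D₂ : Type*} [Fintype D₁] [Fintype D₂]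
    {X₁ X₂ Z₁ Z₂ : Type*}
    [NormedAddCommGroup X₁] [InnerProductSpace ℂ X₁] [FiniteDimensional ℂ X₁]
    [NormedAddCommGroup X₂] [InnerProductSpace ℂ X₂] [FiniteDimensional ℂ X₂]
    [NormedAddCommGroup Z₁] [InnerProductSpace ℂ Z₁] [FiniteDimensional ℂ Z₁]
    [NormedAddCommGroup Z₂] [InnerProductSpace ℂ Z₂] [FiniteDimensional ℂ Z₂]
    (A : D₁ → D₂ → (Z₂ →ₗ[ℂ] Z₁)) (Δ : D₁ → D₂ → (X₂ →ₗ[ℂ] X₁)) : ℝ≥0∞ :=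
  ⨅ (k : ℕ) (Υ : D₁ → (Z₁ →ₗ[ℂ] PiLp 2 (fun _ : Fin k => X₁)))
    (Φ : D₂ → (Z₂ →ₗ[ℂ] PiLp 2 (fun _ : Fin k => X₂)))
    (_ : ∀ x y, A x y =
      LinearMap.adjoint (Υ x) ∘ₗ piBlock (fun _ : Fin k => Δ x y) ∘ₗ Φ y),
    (⨆ x, ENNReal.ofReal (opNorm (Υ x) ^ 2)) ⊔ (⨆ y, ENNReal.ofReal (opNorm (Φ y) ^ 2))

/-- Block-diagonal direct sum `f ⊕ g` on the `ℓ²`-direct sum of two spaces. -/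
noncomputable def dsum {E E' F F' : Type*}
    [NormedAddCommGroup E] [InnerProductSpace ℂ E]
    [NormedAddCommGroup E'] [InnerProductSpace ℂ E']
    [NormedAddCommGroup F] [InnerProductSpace ℂ F]
    [NormedAddCommGroup F'] [InnerProductSpace ℂ F']
    (f : E →ₗ[ℂ] F) (g : E' →ₗ[ℂ] F') :
    WithLp 2 (E × E') →ₗ[ℂ] WithLp 2 (F × F') :=
  (WithLp.linearEquiv 2 ℂ (F × F')).symm.toLinearMap ∘ₗ
    (LinearMap.prodMap f g) ∘ₗ (WithLp.linearEquiv 2 ℂ (E × E')).toLinearMap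

/-- A realization of the tensor product of two finite-dimensional complex inner product
spaces `Z, Z'` inside a space `ZW`: a bilinear map `t` whose image spans `ZW` and which
multiplies inner products of pure tensors (`⟨a ⊗ b, c ⊗ d⟩ = ⟨a,c⟩⟨b,d⟩`). -/
structure TensorStructure (Z Z' ZW : Type*)
    [NormedAddCommGroup Z] [InnerProductSpace ℂ Z]
    [NormedAddCommGroup Z'] [InnerProductSpace ℂ Z']
    [NormedAddCommGroup ZW] [InnerProductSpace ℂ ZW] where
  t : Z →ₗ[ℂ] Z' →ₗ[ℂ] ZW
  inner_t : ∀ (a c : Z) (b d : Z'),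
    (inner ℂ (t a b) (t c d) : ℂ) = (inner ℂ a c : ℂ) * (inner ℂ b d : ℂ)
  span_t : Submodule.span ℂ (Set.range fun p : Z × Z' => t p.1 p.2) = ⊤

open scoped InnerProductSpace

section opNorm

variable {E F : Type*} [NormedAddCommGroup E] [InnerProductSpace ℂ E] [FiniteDimensional ℂ E]
    [NormedAddCommGroup F] [InnerProductSpace ℂ F]

theorem norm_apply_sq_le_of_opNorm_sq_le {f : E →ₗ[ℂ] F} {c : ℝ} (h : opNorm f ^ 2 ≤ c)
    (u : E) : ‖f u‖ ^ 2 ≤ c * ‖u‖ ^ 2 := by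
  have hu : ‖f u‖ ≤ opNorm f * ‖u‖ := (LinearMap.toContinuousLinearMap f).le_opNorm u
  calc ‖f u‖ ^ 2 ≤ (opNorm f * ‖u‖) ^ 2 := by gcongr
    _ = opNorm f ^ 2 * ‖u‖ ^ 2 := mul_pow _ _ _
    _ ≤ c * ‖u‖ ^ 2 := by gcongr

theorem opNorm_sq_le_of_norm_apply_sq_le {f : E →ₗ[ℂ] F} {c : ℝ} (hc : 0 ≤ c)
    (h : ∀ u, ‖f u‖ ^ 2 ≤ c * ‖u‖ ^ 2) : opNorm f ^ 2 ≤ c := by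
  have hf : opNorm f ≤ √c := by
    refine ContinuousLinearMap.opNorm_le_bound _ (Real.sqrt_nonneg c) fun u => ?_
    rw [← Real.sqrt_sq (norm_nonneg _), ← Real.sqrt_sq (norm_nonneg u), ← Real.sqrt_mul hc]
    exact Real.sqrt_le_sqrt (h u)
  calc opNorm f ^ 2 ≤ √c ^ 2 := by gcongr; exact norm_nonneg _
    _ = c := Real.sq_sqrt hc

end opNorm

theorem ENNReal.exists_lt_ofReal_lt_ofReal_of_add_lt_ofReal {a b : ℝ≥0∞} {c : ℝ}
    (h : a + b < ENNReal.ofReal c) :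
    ∃ c₁ c₂ : ℝ, a < ENNReal.ofReal c₁ ∧ b < ENNReal.ofReal c₂ ∧ c₁ + c₂ = c := by
  have ha : a ≠ ⊤ := (le_self_add.trans_lt h).ne_top
  have hb : b ≠ ⊤ := (le_add_self.trans_lt h).ne_top
  have hab : a.toReal + b.toReal < c := by
    rw [← ENNReal.toReal_add ha hb]
    exact ENNReal.toReal_lt_of_lt_ofReal h
  refine ⟨a.toReal + (c - a.toReal - b.toReal) / 2, b.toReal + (c - a.toReal - b.toReal) / 2,
    (ENNReal.lt_ofReal_iff_toReal_lt ha).2 ?_, (ENNReal.lt_ofReal_iff_toReal_lt hb).2 ?_, ?_⟩ <;>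
  linarith

def IsUnitaryMap.toLinearIsometryEquiv {E : Type*} [NormedAddCommGroup E]
    [InnerProductSpace ℂ E] [FiniteDimensional ℂ E] {f : E →ₗ[ℂ] E} (hf : IsUnitaryMap f) :
    E ≃ₗᵢ[ℂ] E :=
  (LinearEquiv.ofLinearMap f (LinearMap.adjoint f) hf.2 hf.1).isometryOfInner fun u v => by
    rw [LinearEquiv.coe_ofLinearMap, ← LinearMap.adjoint_inner_right, ← LinearMap.comp_apply,
      hf.1, LinearMap.id_apply]

@[simp]
theorem IsUnitaryMap.coe_toLinearIsometryEquiv {E : Type*} [NormedAddCommGroup E]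
    [InnerProductSpace ℂ E] [FiniteDimensional ℂ E] {f : E →ₗ[ℂ] E} (hf : IsUnitaryMap f) :
    ⇑hf.toLinearIsometryEquiv = f := rfl

theorem dsum_sub_dsum {E E' F F' : Type*} [NormedAddCommGroup E] [InnerProductSpace ℂ E]
    [NormedAddCommGroup E'] [InnerProductSpace ℂ E'] [NormedAddCommGroup F]
    [InnerProductSpace ℂ F] [NormedAddCommGroup F'] [InnerProductSpace ℂ F']
    (f₁ f₂ : E →ₗ[ℂ] F) (g₁ g₂ : E' →ₗ[ℂ] F') :
    dsum f₁ g₁ - dsum f₂ g₂ = dsum (f₁ - f₂) (g₁ - g₂) :=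
  rfl

section stack

variable {E E' X X' : Type*} [NormedAddCommGroup E] [InnerProductSpace ℂ E]
    [NormedAddCommGroup E'] [InnerProductSpace ℂ E'] [NormedAddCommGroup X]
    [InnerProductSpace ℂ X] [NormedAddCommGroup X'] [InnerProductSpace ℂ X'] {ι κ : Type*}

def stack (F : E →ₗ[ℂ] PiLp 2 (fun _ : ι => X)) (G : E →ₗ[ℂ] PiLp 2 (fun _ : κ => X)) :
    E →ₗ[ℂ] PiLp 2 (fun _ : ι ⊕ κ => X) where
  toFun u := WithLp.toLp 2 fun i => Sum.elim (F u) (G u) i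
  map_add' u v := by ext (i | i) <;> simp
  map_smul' c u := by ext (i | i) <;> simp

def piStack (F : κ → (E →ₗ[ℂ] PiLp 2 (fun _ : ι => X))) :
    E →ₗ[ℂ] PiLp 2 (fun _ : κ × ι => X) where
  toFun u := WithLp.toLp 2 fun p => F p.1 u p.2
  map_add' u v := by ext p; simp
  map_smul' c u := by ext p; simp

variable [Fintype ι] [Fintype κ]

theorem norm_stack_apply_sq (F : E →ₗ[ℂ] PiLp 2 (fun _ : ι => X))
    (G : E →ₗ[ℂ] PiLp 2 (fun _ : κ => X)) (u : E) :
    ‖stack F G u‖ ^ 2 = ‖F u‖ ^ 2 + ‖G u‖ ^ 2 := by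
  simp only [PiLp.norm_sq_eq_of_L2, Fintype.sum_sum_type]
  rfl

theorem inner_stack_piBlock_stack (δ : X' →ₗ[ℂ] X) (F : E →ₗ[ℂ] PiLp 2 (fun _ : ι => X))
    (G : E →ₗ[ℂ] PiLp 2 (fun _ : κ => X)) (F' : E' →ₗ[ℂ] PiLp 2 (fun _ : ι => X'))
    (G' : E' →ₗ[ℂ] PiLp 2 (fun _ : κ => X')) (w : E) (v : E') :
    ⟪stack F G w, piBlock (fun _ => δ) (stack F' G' v)⟫_ℂ =
      ⟪F w, piBlock (fun _ => δ) (F' v)⟫_ℂ + ⟪G w, piBlock (fun _ => δ) (G' v)⟫_ℂ := by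
  simp only [PiLp.inner_apply, Fintype.sum_sum_type]
  rfl

theorem norm_piStack_apply_sq (F : κ → (E →ₗ[ℂ] PiLp 2 (fun _ : ι => X))) (u : E) :
    ‖piStack F u‖ ^ 2 = ∑ j, ‖F j u‖ ^ 2 := by
  simp only [PiLp.norm_sq_eq_of_L2, Fintype.sum_prod_type]
  rfl

theorem inner_piStack_piBlock_piStack (δ : X' →ₗ[ℂ] X)
    (F : κ → (E →ₗ[ℂ] PiLp 2 (fun _ : ι => X))) (G : κ → (E' →ₗ[ℂ] PiLp 2 (fun _ : ι => X')))
    (w : E) (v : E') :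
    ⟪piStack F w, piBlock (fun _ => δ) (piStack G v)⟫_ℂ =
      ∑ j, ⟪F j w, piBlock (fun _ => δ) (G j v)⟫_ℂ := by
  simp only [PiLp.inner_apply, Fintype.sum_prod_type]
  rfl

end stack

namespace TensorStructure

variable {Z Z' ZW : Type*} [NormedAddCommGroup Z] [InnerProductSpace ℂ Z]
    [NormedAddCommGroup Z'] [InnerProductSpace ℂ Z'] [NormedAddCommGroup ZW]
    [InnerProductSpace ℂ ZW] (TS : TensorStructure Z Z' ZW)

protected def flip : TensorStructure Z' Z ZW where
  t := TS.t.flip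
  inner_t b d a c := by rw [LinearMap.flip_apply, LinearMap.flip_apply, TS.inner_t, mul_comm]
  span_t := by
    rw [← TS.span_t, ← Prod.swap_surjective.range_comp]
    rfl

@[simp]
theorem flip_t (a : Z) (b : Z') : TS.flip.t b a = TS.t a b := rfl

theorem linearMap_ext {M : Type*} [AddCommGroup M] [Module ℂ M] {f g : ZW →ₗ[ℂ] M}
    (h : ∀ a b, f (TS.t a b) = g (TS.t a b)) : f = g :=
  LinearMap.ext_on_range TS.span_t fun p => h p.1 p.2

variable [FiniteDimensional ℂ Z] [FiniteDimensional ℂ ZW]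

def contract (g : Z') : ZW →ₗ[ℂ] Z :=
  LinearMap.adjoint (TS.t.flip g)

theorem inner_contract_left (g : Z') (w : ZW) (a : Z) : ⟪TS.contract g w, a⟫_ℂ = ⟪w, TS.t a g⟫_ℂ :=
  LinearMap.adjoint_inner_left _ _ _

theorem contract_t (g : Z') (a : Z) (b : Z') : TS.contract g (TS.t a b) = ⟪g, b⟫_ℂ • a :=
  ext_inner_right ℂ fun c => by
    rw [inner_contract_left, TS.inner_t, inner_smul_left, inner_conj_symm, mul_comm]

variable {κ : Type*} [Fintype κ]

theorem sum_t_contract (e : OrthonormalBasis κ ℂ Z') (u : ZW) :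
    ∑ j, TS.t (TS.contract (e j) u) (e j) = u := by
  have h : ∑ j, TS.t.flip (e j) ∘ₗ TS.contract (e j) = LinearMap.id :=
    TS.linearMap_ext fun a b => by
      simp only [LinearMap.coe_sum, Finset.sum_apply, LinearMap.comp_apply, contract_t,
        LinearMap.flip_apply, map_smul, LinearMap.id_apply]
      simp only [← map_smul, ← map_sum, e.sum_repr']
  simpa using LinearMap.congr_fun h u

theorem sum_norm_contract_sq (e : OrthonormalBasis κ ℂ Z') (u : ZW) :
    ∑ j, ‖TS.contract (e j) u‖ ^ 2 = ‖u‖ ^ 2 := by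
  have h : ∑ j, ⟪TS.contract (e j) u, TS.contract (e j) u⟫_ℂ = ⟪u, u⟫_ℂ := by
    simp only [inner_contract_left, ← inner_sum, sum_t_contract]
  simp only [inner_self_eq_norm_sq_to_K] at h
  exact_mod_cast h

theorem inner_apply_eq_sum (e : OrthonormalBasis κ ℂ Z') {T : ZW →ₗ[ℂ] ZW} {P : Z → Z}
    {Q : Z' → Z'} (hT : ∀ a b, T (TS.t a b) = TS.t (P a) (Q b)) (w v : ZW) :
    ⟪w, T v⟫_ℂ = ∑ j, ⟪TS.contract (Q (e j)) w, P (TS.contract (e j) v)⟫_ℂ := by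
  conv_lhs => rw [← TS.sum_t_contract e v]
  simp only [map_sum, hT, inner_sum, inner_contract_left]

variable [FiniteDimensional ℂ Z']

def map (P : Z →ₗ[ℂ] Z) (Q : Z' →ₗ[ℂ] Z') : ZW →ₗ[ℂ] ZW :=
  ∑ j, TS.t.flip (Q (stdOrthonormalBasis ℂ Z' j)) ∘ₗ P ∘ₗ TS.contract (stdOrthonormalBasis ℂ Z' j)

theorem map_t (P : Z →ₗ[ℂ] Z) (Q : Z' →ₗ[ℂ] Z') (a : Z) (b : Z') :
    TS.map P Q (TS.t a b) = TS.t (P a) (Q b) := by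
  simp only [map, LinearMap.coe_sum, Finset.sum_apply, LinearMap.comp_apply, contract_t,
    LinearMap.flip_apply, map_smul]
  simp only [← LinearMap.map_smul, ← map_sum, (stdOrthonormalBasis ℂ Z').sum_repr']

end TensorStructure

section factorization

variable {D₁ D₂ : Type*} {X₁ X₂ Z₁ Z₂ Z₁' Z₂' : Type*}
    [NormedAddCommGroup X₁] [InnerProductSpace ℂ X₁] [NormedAddCommGroup X₂]
    [InnerProductSpace ℂ X₂] [NormedAddCommGroup Z₁] [InnerProductSpace ℂ Z₁]
    [NormedAddCommGroup Z₂] [InnerProductSpace ℂ Z₂] [NormedAddCommGroup Z₁']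
    [InnerProductSpace ℂ Z₁'] [NormedAddCommGroup Z₂'] [InnerProductSpace ℂ Z₂']

/-- A factorization `A x y = (Υ x)† ∘ (⊕ Δ x y) ∘ Φ y` with `‖Υ x‖² ≤ c` and `‖Φ y‖² ≤ c`, over an
arbitrary finite index type, stated through matrix coefficients and pointwise norm bounds. -/
def FactorsWithBound (A : D₁ → D₂ → (Z₂ →ₗ[ℂ] Z₁)) (Δ : D₁ → D₂ → (X₂ →ₗ[ℂ] X₁)) (c : ℝ) :
    Prop :=
  ∃ (ι : Type) (_ : Fintype ι) (Υ : D₁ → (Z₁ →ₗ[ℂ] PiLp 2 (fun _ : ι => X₁)))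
    (Φ : D₂ → (Z₂ →ₗ[ℂ] PiLp 2 (fun _ : ι => X₂))),
    (∀ x y w v, ⟪w, A x y v⟫_ℂ = ⟪Υ x w, piBlock (fun _ => Δ x y) (Φ y v)⟫_ℂ) ∧
    (∀ x w, ‖Υ x w‖ ^ 2 ≤ c * ‖w‖ ^ 2) ∧ (∀ y v, ‖Φ y v‖ ^ 2 ≤ c * ‖v‖ ^ 2)

variable {Δ : D₁ → D₂ → (X₂ →ₗ[ℂ] X₁)} {c c₁ c₂ : ℝ}

namespace FactorsWithBound

theorem of_compression {A : D₁ → D₂ → (Z₂ →ₗ[ℂ] Z₁)} {A' : D₁ → D₂ → (Z₂' →ₗ[ℂ] Z₁')}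
    (hA : FactorsWithBound A Δ c) (hc : 0 ≤ c) (L : Z₁' →ₗ[ℂ] Z₁) (R : Z₂' →ₗ[ℂ] Z₂)
    (hL : ∀ w, ‖L w‖ ≤ ‖w‖) (hR : ∀ v, ‖R v‖ ≤ ‖v‖)
    (hA' : ∀ x y w v, ⟪w, A' x y v⟫_ℂ = ⟪L w, A x y (R v)⟫_ℂ) :
    FactorsWithBound A' Δ c := by
  obtain ⟨ι, _, Υ, Φ, hfact, hΥ, hΦ⟩ := hA
  refine ⟨ι, inferInstance, fun x => Υ x ∘ₗ L, fun y => Φ y ∘ₗ R,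
    fun x y w v => (hA' x y w v).trans (hfact x y _ _), fun x w => ?_, fun y v => ?_⟩
  · exact (hΥ x (L w)).trans (by gcongr; exact hL w)
  · exact (hΦ y (R v)).trans (by gcongr; exact hR v)

theorem add {A B : D₁ → D₂ → (Z₂ →ₗ[ℂ] Z₁)} (hA : FactorsWithBound A Δ c₁)
    (hB : FactorsWithBound B Δ c₂) : FactorsWithBound (fun x y => A x y + B x y) Δ (c₁ + c₂) := by
  obtain ⟨ι, _, Υ₁, Φ₁, hfact₁, hΥ₁, hΦ₁⟩ := hA
  obtain ⟨κ, _, Υ₂, Φ₂, hfact₂, hΥ₂, hΦ₂⟩ := hB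
  refine ⟨ι ⊕ κ, inferInstance, fun x => stack (Υ₁ x) (Υ₂ x), fun y => stack (Φ₁ y) (Φ₂ y),
    fun x y w v => ?_, fun x w => ?_, fun y v => ?_⟩
  · rw [inner_stack_piBlock_stack, ← hfact₁, ← hfact₂, LinearMap.add_apply, inner_add_right]
  · rw [norm_stack_apply_sq, add_mul]
    exact add_le_add (hΥ₁ x w) (hΥ₂ x w)
  · rw [norm_stack_apply_sq, add_mul]
    exact add_le_add (hΦ₁ y v) (hΦ₂ y v)

theorem dsum {A : D₁ → D₂ → (Z₂ →ₗ[ℂ] Z₁)} {B : D₁ → D₂ → (Z₂' →ₗ[ℂ] Z₁')}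
    (hA : FactorsWithBound A Δ c) (hB : FactorsWithBound B Δ c) :
    FactorsWithBound (fun x y => dsum (A x y) (B x y)) Δ c := by
  obtain ⟨ι, _, Υ₁, Φ₁, hfact₁, hΥ₁, hΦ₁⟩ := hA
  obtain ⟨κ, _, Υ₂, Φ₂, hfact₂, hΥ₂, hΦ₂⟩ := hB
  refine ⟨ι ⊕ κ, inferInstance,
    fun x => stack (Υ₁ x ∘ₗ WithLp.fstₗ 2 ℂ Z₁ Z₁') (Υ₂ x ∘ₗ WithLp.sndₗ 2 ℂ Z₁ Z₁'),
    fun y => stack (Φ₁ y ∘ₗ WithLp.fstₗ 2 ℂ Z₂ Z₂') (Φ₂ y ∘ₗ WithLp.sndₗ 2 ℂ Z₂ Z₂'),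
    fun x y w v => ?_, fun x w => ?_, fun y v => ?_⟩
  · rw [inner_stack_piBlock_stack, WithLp.prod_inner_apply]
    exact congr_arg₂ (· + ·) (hfact₁ x y _ _) (hfact₂ x y _ _)
  · rw [norm_stack_apply_sq, WithLp.prod_norm_sq_eq_of_L2 w, mul_add]
    exact add_le_add (hΥ₁ x w.fst) (hΥ₂ x w.snd)
  · rw [norm_stack_apply_sq, WithLp.prod_norm_sq_eq_of_L2 v, mul_add]
    exact add_le_add (hΦ₁ y v.fst) (hΦ₂ y v.snd)

theorem tensor {Z Z' ZW : Type*} [NormedAddCommGroup Z] [InnerProductSpace ℂ Z]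
    [FiniteDimensional ℂ Z] [NormedAddCommGroup Z'] [InnerProductSpace ℂ Z']
    [FiniteDimensional ℂ Z'] [NormedAddCommGroup ZW] [InnerProductSpace ℂ ZW]
    [FiniteDimensional ℂ ZW] {A : D₁ → D₂ → (Z →ₗ[ℂ] Z)} (hA : FactorsWithBound A Δ c)
    (TS : TensorStructure Z Z' ZW) (L : D₁ → Z' ≃ₗᵢ[ℂ] Z') (R : D₂ → Z' ≃ₗᵢ[ℂ] Z')
    {T : D₁ → D₂ → (ZW →ₗ[ℂ] ZW)}
    (hT : ∀ x y a b, T x y (TS.t a b) = TS.t (A x y a) (L x (R y b))) :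
    FactorsWithBound T Δ c := by
  obtain ⟨ι, _, Υ, Φ, hfact, hΥ, hΦ⟩ := hA
  let e := stdOrthonormalBasis ℂ Z'
  refine ⟨Fin (Module.finrank ℂ Z') × ι, inferInstance,
    fun x => piStack fun j => Υ x ∘ₗ TS.contract (L x (e j)),
    fun y => piStack fun j => Φ y ∘ₗ TS.contract ((R y).symm (e j)),
    fun x y w v => ?_, fun x w => ?_, fun y v => ?_⟩
  · rw [inner_piStack_piBlock_piStack, TS.inner_apply_eq_sum (e.map (R y).symm) (hT x y)]
    simp [hfact]
  · rw [norm_piStack_apply_sq, ← TS.sum_norm_contract_sq (e.map (L x)) w, Finset.mul_sum]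
    exact Finset.sum_le_sum fun j _ => hΥ x _
  · rw [norm_piStack_apply_sq, ← TS.sum_norm_contract_sq (e.map (R y).symm) v, Finset.mul_sum]
    exact Finset.sum_le_sum fun j _ => hΦ y _

end FactorsWithBound

theorem eq_adjoint_comp_piBlock_comp_iff {ι : Type*} [Fintype ι] [FiniteDimensional ℂ X₁]
    [FiniteDimensional ℂ Z₁] (A : Z₂ →ₗ[ℂ] Z₁) (Δ : ι → (X₂ →ₗ[ℂ] X₁))
    (Υ : Z₁ →ₗ[ℂ] PiLp 2 (fun _ : ι => X₁)) (Φ : Z₂ →ₗ[ℂ] PiLp 2 (fun _ : ι => X₂)) :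
    A = LinearMap.adjoint Υ ∘ₗ piBlock Δ ∘ₗ Φ ↔ ∀ w v, ⟪w, A v⟫_ℂ = ⟪Υ w, piBlock Δ (Φ v)⟫_ℂ := by
  simp only [LinearMap.ext_iff, LinearMap.comp_apply, ← LinearMap.adjoint_inner_right Υ]
  exact ⟨fun h w v => by rw [h], fun h v => ext_inner_left ℂ fun w => h w v⟩

variable [Fintype D₁] [Fintype D₂] [FiniteDimensional ℂ X₁] [FiniteDimensional ℂ X₂]
    [FiniteDimensional ℂ Z₁] [FiniteDimensional ℂ Z₂] {A : D₁ → D₂ → (Z₂ →ₗ[ℂ] Z₁)}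

theorem relGamma2_le_ofReal (hc : 0 ≤ c) (h : FactorsWithBound A Δ c) :
    relGamma2 A Δ ≤ ENNReal.ofReal c := by
  obtain ⟨ι, _, Υ, Φ, hfact, hΥ, hΦ⟩ := h
  let e₁ := LinearIsometryEquiv.piLpCongrLeft 2 ℂ X₁ (Fintype.equivFin ι)
  let e₂ := LinearIsometryEquiv.piLpCongrLeft 2 ℂ X₂ (Fintype.equivFin ι)
  refine iInf_le_of_le (Fintype.card ι) <| iInf_le_of_le (fun x => e₁.toLinearMap ∘ₗ Υ x) <|
    iInf_le_of_le (fun y => e₂.toLinearMap ∘ₗ Φ y) <| iInf_le_of_le ?_ <|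
      sup_le (iSup_le fun x => ?_) (iSup_le fun y => ?_)
  · intro x y
    rw [eq_adjoint_comp_piBlock_comp_iff]
    intro w v
    rw [hfact]
    exact (e₁.inner_map_map _ _).symm
  · refine ENNReal.ofReal_le_ofReal (opNorm_sq_le_of_norm_apply_sq_le hc fun w => ?_)
    simpa using hΥ x w
  · refine ENNReal.ofReal_le_ofReal (opNorm_sq_le_of_norm_apply_sq_le hc fun v => ?_)
    simpa using hΦ y v

theorem factorsWithBound_of_relGamma2_lt (h : relGamma2 A Δ < ENNReal.ofReal c) :
    FactorsWithBound A Δ c := by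
  simp only [relGamma2, iInf_lt_iff, sup_lt_iff, iSup_lt_iff] at h
  obtain ⟨k, Υ, Φ, hfact, ⟨a, ha, hΥ⟩, ⟨b, hb, hΦ⟩⟩ := h
  have hsq {r : ℝ} {s : ℝ≥0∞} (hr : ENNReal.ofReal r ≤ s) (hs : s < ENNReal.ofReal c) : r ≤ c :=
    (ENNReal.ofReal_lt_ofReal_iff'.1 (hr.trans_lt hs)).1.le
  exact ⟨Fin k, inferInstance, Υ, Φ,
    fun x y => (eq_adjoint_comp_piBlock_comp_iff _ _ _ _).1 (hfact x y),
    fun x => norm_apply_sq_le_of_opNorm_sq_le (hsq (hΥ x) ha),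
    fun y => norm_apply_sq_le_of_opNorm_sq_le (hsq (hΦ y) hb)⟩

theorem relGamma2_le_iff {r : ℝ≥0∞} :
    relGamma2 A Δ ≤ r ↔ ∀ c : ℝ, r < ENNReal.ofReal c → FactorsWithBound A Δ c := by
  refine ⟨fun h c hc => factorsWithBound_of_relGamma2_lt (h.trans_lt hc), fun h => ?_⟩
  refine le_of_forall_gt_imp_ge_of_dense fun s hs => ?_
  rcases eq_or_ne s ⊤ with rfl | hs_top
  · exact le_top
  rw [← ENNReal.ofReal_toReal hs_top] at hs ⊢
  exact relGamma2_le_ofReal ENNReal.toReal_nonneg (h _ hs)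

theorem relGamma2_le_of_compression [FiniteDimensional ℂ Z₁'] [FiniteDimensional ℂ Z₂']
    {A' : D₁ → D₂ → (Z₂' →ₗ[ℂ] Z₁')} (L : Z₁' →ₗ[ℂ] Z₁) (R : Z₂' →ₗ[ℂ] Z₂)
    (hL : ∀ w, ‖L w‖ ≤ ‖w‖) (hR : ∀ v, ‖R v‖ ≤ ‖v‖)
    (hA' : ∀ x y w v, ⟪w, A' x y v⟫_ℂ = ⟪L w, A x y (R v)⟫_ℂ) :
    relGamma2 A' Δ ≤ relGamma2 A Δ :=
  relGamma2_le_iff.2 fun c hc =>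
    (relGamma2_le_iff.1 le_rfl c hc).of_compression
      (ENNReal.ofReal_pos.1 (zero_le.trans_lt hc)).le L R hL hR hA'

theorem relGamma2_add_le {B : D₁ → D₂ → (Z₂ →ₗ[ℂ] Z₁)} :
    relGamma2 (fun x y => A x y + B x y) Δ ≤ relGamma2 A Δ + relGamma2 B Δ := by
  refine relGamma2_le_iff.2 fun c hc => ?_
  obtain ⟨c₁, c₂, h₁, h₂, rfl⟩ := ENNReal.exists_lt_ofReal_lt_ofReal_of_add_lt_ofReal hc
  exact (relGamma2_le_iff.1 le_rfl c₁ h₁).add (relGamma2_le_iff.1 le_rfl c₂ h₂)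

theorem relGamma2_dsum [FiniteDimensional ℂ Z₁'] [FiniteDimensional ℂ Z₂']
    {B : D₁ → D₂ → (Z₂' →ₗ[ℂ] Z₁')} :
    relGamma2 (fun x y => dsum (A x y) (B x y)) Δ = max (relGamma2 A Δ) (relGamma2 B Δ) := by
  refine le_antisymm (relGamma2_le_iff.2 fun c hc => ?_) (max_le ?_ ?_)
  · rw [max_lt_iff] at hc
    exact (relGamma2_le_iff.1 le_rfl c hc.1).dsum (relGamma2_le_iff.1 le_rfl c hc.2)
  · refine relGamma2_le_of_compression
      ((WithLp.linearEquiv 2 ℂ (Z₁ × Z₁')).symm.toLinearMap ∘ₗ LinearMap.inl ℂ Z₁ Z₁')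
      ((WithLp.linearEquiv 2 ℂ (Z₂ × Z₂')).symm.toLinearMap ∘ₗ LinearMap.inl ℂ Z₂ Z₂')
      (fun w => by simp) (fun v => by simp) fun x y w v => ?_
    simp [WithLp.prod_inner_apply, dsum]
  · refine relGamma2_le_of_compression
      ((WithLp.linearEquiv 2 ℂ (Z₁ × Z₁')).symm.toLinearMap ∘ₗ LinearMap.inr ℂ Z₁ Z₁')
      ((WithLp.linearEquiv 2 ℂ (Z₂ × Z₂')).symm.toLinearMap ∘ₗ LinearMap.inr ℂ Z₂ Z₂')
      (fun w => by simp) (fun v => by simp) fun x y w v => ?_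
    simp [WithLp.prod_inner_apply, dsum]

theorem relGamma2_tensor_le {Z Z' ZW : Type*} [NormedAddCommGroup Z] [InnerProductSpace ℂ Z]
    [FiniteDimensional ℂ Z] [NormedAddCommGroup Z'] [InnerProductSpace ℂ Z']
    [FiniteDimensional ℂ Z'] [NormedAddCommGroup ZW] [InnerProductSpace ℂ ZW]
    [FiniteDimensional ℂ ZW] (TS : TensorStructure Z Z' ZW) {A : D₁ → D₂ → (Z →ₗ[ℂ] Z)}
    (L : D₁ → Z' ≃ₗᵢ[ℂ] Z') (R : D₂ → Z' ≃ₗᵢ[ℂ] Z') {T : D₁ → D₂ → (ZW →ₗ[ℂ] ZW)}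
    (hT : ∀ x y a b, T x y (TS.t a b) = TS.t (A x y a) (L x (R y b))) :
    relGamma2 T Δ ≤ relGamma2 A Δ :=
  relGamma2_le_iff.2 fun c hc => (relGamma2_le_iff.1 le_rfl c hc).tensor TS L R hT

end factorization

theorem statement12_general {D : Type} [Fintype D] {X Z Z' ZW : Type}
    [NormedAddCommGroup X] [InnerProductSpace ℂ X] [FiniteDimensional ℂ X]
    [NormedAddCommGroup Z] [InnerProductSpace ℂ Z] [FiniteDimensional ℂ Z]
    [NormedAddCommGroup Z'] [InnerProductSpace ℂ Z'] [FiniteDimensional ℂ Z']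
    [NormedAddCommGroup ZW] [InnerProductSpace ℂ ZW] [FiniteDimensional ℂ ZW]
    (O : D → (X →ₗ[ℂ] X))
    (V : D → (Z →ₗ[ℂ] Z)) (hV : ∀ x, IsUnitaryMap (V x))
    (W : D → (Z' →ₗ[ℂ] Z')) (hW : ∀ x, IsUnitaryMap (W x))
    (TS : TensorStructure Z Z' ZW)
    (VW : D → (ZW →ₗ[ℂ] ZW))
    (hVW : ∀ x a b, VW x (TS.t a b) = TS.t (V x a) (W x b)) :
    (relGamma2 (fun x y => dsum (V x) (W x) - dsum (V y) (W y))
        (fun x y => O x - O y) =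
      max (relGamma2 (fun x y => V x - V y) (fun x y => O x - O y))
        (relGamma2 (fun x y => W x - W y) (fun x y => O x - O y))) ∧
    (relGamma2 (fun x y => V x - V y) (fun x y => O x - O y) ≠ ⊤ →
      relGamma2 (fun x y => W x - W y) (fun x y => O x - O y) ≠ ⊤ →
      relGamma2 (fun x y => VW x - VW y) (fun x y => O x - O y) ≤
        relGamma2 (fun x y => V x - V y) (fun x y => O x - O y) +
          relGamma2 (fun x y => W x - W y) (fun x y => O x - O y)) := by
  refine ⟨by simpa only [dsum_sub_dsum] using relGamma2_dsum, fun _ _ => ?_⟩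
  let M x y := TS.map (V y) (W x)
  have h₁ : relGamma2 (fun x y => VW x - M x y) (fun x y => O x - O y) ≤
      relGamma2 (fun x y => V x - V y) (fun x y => O x - O y) :=
    relGamma2_tensor_le TS (fun x => (hW x).toLinearIsometryEquiv)
      (fun _ => LinearIsometryEquiv.refl ℂ Z') fun x y a b => by simp [M, hVW, TS.map_t]
  have h₂ : relGamma2 (fun x y => M x y - VW y) (fun x y => O x - O y) ≤
      relGamma2 (fun x y => W x - W y) (fun x y => O x - O y) :=
    relGamma2_tensor_le TS.flip (fun _ => LinearIsometryEquiv.refl ℂ Z)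
      (fun y => (hV y).toLinearIsometryEquiv) fun x y b a => by simp [M, hVW, TS.map_t]
  calc relGamma2 (fun x y => VW x - VW y) (fun x y => O x - O y)
      = relGamma2 (fun x y => (VW x - M x y) + (M x y - VW y)) (fun x y => O x - O y) := by
        simp only [sub_add_sub_cancel]
    _ ≤ _ := relGamma2_add_le
    _ ≤ _ := add_le_add h₁ h₂

/-- Adversary bound for direct sums and tensor products of unitary
implementations: (i) `γ₂(V_x ⊕ W_x − V_y ⊕ W_y | O_x − O_y)
= max(γ₂(V_x − V_y | O_x − O_y), γ₂(W_x − W_y | O_x − O_y))`; and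
(ii) if both are finite, `γ₂(V_x ⊗ W_x − V_y ⊗ W_y | O_x − O_y)
≤ γ₂(V_x − V_y | O_x − O_y) + γ₂(W_x − W_y | O_x − O_y)`,
where `VW_x = V_x ⊗ W_x` with respect to a realization of the tensor product `Z ⊗ Z'`. -/
theorem statement12 {D : Type} [Fintype D] {X Z Z' ZW : Type}
    [NormedAddCommGroup X] [InnerProductSpace ℂ X] [FiniteDimensional ℂ X]
    [NormedAddCommGroup Z] [InnerProductSpace ℂ Z] [FiniteDimensional ℂ Z]
    [NormedAddCommGroup Z'] [InnerProductSpace ℂ Z'] [FiniteDimensional ℂ Z']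
    [NormedAddCommGroup ZW] [InnerProductSpace ℂ ZW] [FiniteDimensional ℂ ZW]
    (O : D → (X →ₗ[ℂ] X)) (hO : ∀ x, IsUnitaryMap (O x))
    (V : D → (Z →ₗ[ℂ] Z)) (hV : ∀ x, IsUnitaryMap (V x))
    (W : D → (Z' →ₗ[ℂ] Z')) (hW : ∀ x, IsUnitaryMap (W x))
    (TS : TensorStructure Z Z' ZW)
    (VW : D → (ZW →ₗ[ℂ] ZW))
    (hVW : ∀ x a b, VW x (TS.t a b) = TS.t (V x a) (W x b)) :
    (relGamma2 (fun x y => dsum (V x) (W x) - dsum (V y) (W y))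
        (fun x y => O x - O y) =
      max (relGamma2 (fun x y => V x - V y) (fun x y => O x - O y))
        (relGamma2 (fun x y => W x - W y) (fun x y => O x - O y))) ∧
    (relGamma2 (fun x y => V x - V y) (fun x y => O x - O y) ≠ ⊤ →
      relGamma2 (fun x y => W x - W y) (fun x y => O x - O y) ≠ ⊤ →
      relGamma2 (fun x y => VW x - VW y) (fun x y => O x - O y) ≤
        relGamma2 (fun x y => V x - V y) (fun x y => O x - O y) +
          relGamma2 (fun x y => W x - W y) (fun x y => O x - O y)) :=
  statement12_general O V hV W hW TS VW hVW

end
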